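/- For every even k ≥ 2 and every n ≥ (9/2)k − 3, there exists an edge-colored complete graph G on n vertices with Δ^mon(G) = n − (3/2)k that contains at most k − 1 pairwise vertex-disjoint properly edge-colored cycles. -/
import Mathlib


/-- Number of edges of color `a` incident with `v` (monochromatic degree). -/
noncomputable def monDeg {V : Type*} (col : V → V → ℕ) (v : V) (a : ℕ) : ℕ :=
  {u | u ≠ v ∧ col v u = a}.ncard

/-- Color degree of a vertex: number of distinct colors on incident edges. -/
noncomputable def colorDeg {V : Type*} (col : V → V → ℕ) (v : V) : ℕ :=
  (col v '' {u | u ≠ v}).ncard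

/-- Maximum monochromatic degree Δ^mon. -/
noncomputable def maxMonDeg {V : Type*} (col : V → V → ℕ) : ℕ :=
  sSup {d | ∃ v a, d = monDeg col v a}

/-- Number of colors appearing on edges. -/
noncomputable def numColors {V : Type*} (col : V → V → ℕ) : ℕ :=
  {a | ∃ u v : V, u ≠ v ∧ col u v = a}.ncard

/-- A properly edge-colored (PC) cycle of length `m`, given by an injective
map `c : ZMod m → V`; adjacent edges get distinct colors. -/
def IsPCCycle {V : Type*} (col : V → V → ℕ) (m : ℕ) (c : ZMod m → V) : Prop :=
  3 ≤ m ∧ Function.Injective c ∧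
    ∀ i : ZMod m, col (c i) (c (i + 1)) ≠ col (c (i + 1)) (c (i + 2))

/-- `k` pairwise vertex-disjoint PC cycles. -/
def HasKDisjointPCCycles {V : Type*} (col : V → V → ℕ) (k : ℕ) : Prop :=
  ∃ (m : Fin k → ℕ) (c : ∀ j, ZMod (m j) → V),
    (∀ j, IsPCCycle col (m j) (c j)) ∧
    ∀ j j', j ≠ j' → Disjoint (Set.range (c j)) (Set.range (c j'))

/-- `k` pairwise vertex-disjoint PC cycles, each of length at most 4. -/
def HasKDisjointShortPCCycles {V : Type*} (col : V → V → ℕ) (k : ℕ) : Prop :=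
  ∃ (m : Fin k → ℕ) (c : ∀ j, ZMod (m j) → V),
    (∀ j, IsPCCycle col (m j) (c j) ∧ m j ≤ 4) ∧
    ∀ j j', j ≠ j' → Disjoint (Set.range (c j)) (Set.range (c j'))

/-- A directed cycle of length `m` in a digraph with arc relation `A`. -/
def IsDicycle {V : Type*} (A : V → V → Prop) (m : ℕ) (c : ZMod m → V) : Prop :=
  2 ≤ m ∧ Function.Injective c ∧ ∀ i : ZMod m, A (c i) (c (i + 1))

/-- `k` pairwise vertex-disjoint directed cycles. -/
def HasKDisjointDicycles {V : Type*} (A : V → V → Prop) (k : ℕ) : Prop :=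
  ∃ (m : Fin k → ℕ) (c : ∀ j, ZMod (m j) → V),
    (∀ j, IsDicycle A (m j) (c j)) ∧
    ∀ j j', j ≠ j' → Disjoint (Set.range (c j)) (Set.range (c j'))

/-- A monochromatic edge-cut: a bipartition with all crossing edges one color. -/
def HasMonochromaticCut {V : Type*} (col : V → V → ℕ) : Prop :=
  ∃ S : Set V, S.Nonempty ∧ Sᶜ.Nonempty ∧ ∃ a, ∀ x ∈ S, ∀ y ∈ Sᶜ, col x y = a

/-- A rainbow triangle: three vertices with pairwise distinct edge colors. -/
def HasRainbowTriangle {V : Type*} (col : V → V → ℕ) : Prop :=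
  ∃ x y z : V, x ≠ y ∧ y ≠ z ∧ x ≠ z ∧
    col x y ≠ col y z ∧ col y z ≠ col x z ∧ col x y ≠ col x z

/-- A Gallai partition of an edge-colored complete graph. -/
def HasGallaiPartition {V : Type*} (col : V → V → ℕ) : Prop :=
  ∃ (q : ℕ) (U : Fin q → Set V), 2 ≤ q ∧ (∀ i, (U i).Nonempty) ∧
    (∀ i j, i ≠ j → Disjoint (U i) (U j)) ∧ (⋃ i, U i) = Set.univ ∧
    (∀ i j, i ≠ j → ∃ a, ∀ x ∈ U i, ∀ y ∈ U j, col x y = a) ∧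
    ∃ a b, ∀ i j, i ≠ j → ∀ x ∈ U i, ∀ y ∈ U j, col x y = a ∨ col x y = b

/-- The coloring used in the construction. -/
def myCol (n m : ℕ) (u v : Fin n) : ℕ :=
  if u.val < m ∧ v.val < m then max u.val v.val
  else if u.val < m then n + v.val
  else if v.val < m then n + u.val
  else 2 * n + max u.val v.val



lemma myCol_ll {n m : ℕ} {u v : Fin n} (hu : u.val < m) (hv : v.val < m) :
    myCol n m u v = max u.val v.val := by simp [myCol, hu, hv]
lemma myCol_lg {n m : ℕ} {u v : Fin n} (hu : u.val < m) (hv : ¬ v.val < m) :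
    myCol n m u v = n + v.val := by simp [myCol, hu, hv]
lemma myCol_gl {n m : ℕ} {u v : Fin n} (hu : ¬ u.val < m) (hv : v.val < m) :
    myCol n m u v = n + u.val := by simp [myCol, hu, hv]
lemma myCol_gg {n m : ℕ} {u v : Fin n} (hu : ¬ u.val < m) (hv : ¬ v.val < m) :
    myCol n m u v = 2 * n + max u.val v.val := by simp [myCol, hu, hv]

lemma ncard_le_of_inj {n : ℕ} (s : Set (Fin n)) (c : ℕ) (f : Fin n → ℕ)
    (hf : ∀ u ∈ s, f u < c) (hinj : ∀ u ∈ s, ∀ v ∈ s, f u = f v → u = v) :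
    s.ncard ≤ c := by
  rw [← Nat.card_coe_set_eq]
  have hc : Nat.card (Fin c) = c := by simp
  rw [← hc]
  exact Nat.card_le_card_of_injective
    (fun u : s => (⟨f u.1, hf u.1 u.2⟩ : Fin c))
    (fun u v h => Subtype.ext (hinj u.1 u.2 v.1 v.2 (by simpa using h)))

lemma ncard_val_lt {n : ℕ} (m : ℕ) (hm : m ≤ n) : {u : Fin n | u.val < m}.ncard = m := by
  have hb : Function.Bijective
      (fun u : {u : Fin n | u.val < m} => (⟨u.1.val, u.2⟩ : Fin m)) := by
    constructor
    · rintro ⟨u, hu⟩ ⟨v, hv⟩ h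
      exact Subtype.ext (Fin.ext (by simpa using h))
    · rintro ⟨i, hi⟩
      exact ⟨⟨⟨i, lt_of_lt_of_le hi hm⟩, hi⟩, rfl⟩
  rw [← Nat.card_coe_set_eq, Nat.card_eq_of_bijective _ hb]
  simp

lemma myCol_monDeg_le {n m : ℕ} (hm1 : 1 ≤ m) (hmn : m < n) (htm : n - m ≤ m + 1)
    (v : Fin n) (a : ℕ) : monDeg (myCol n m) v a ≤ m := by
  unfold monDeg
  by_cases hv : v.val < m
  · by_cases ha : a = v.val
    · -- all elements have val < m
      apply ncard_le_of_inj _ _ (fun u => u.val)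
      · rintro u ⟨hne, hcol⟩
        by_contra hu
        push_neg at hu
        rw [myCol_lg hv (by omega)] at hcol
        omega
      · rintro u ⟨_, _⟩ w ⟨_, _⟩ h
        exact Fin.ext h
    · -- subsingleton
      have hsub : ∀ u ∈ {u : Fin n | u ≠ v ∧ myCol n m v u = a}, ∀ w ∈ {u : Fin n | u ≠ v ∧ myCol n m v u = a}, u = w := by
        rintro u ⟨hun, hu⟩ w ⟨hwn, hw⟩
        have hval : u.val = w.val := by
          by_cases h1 : u.val < m <;> by_cases h2 : w.val < m
          · rw [myCol_ll hv h1] at hu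
            rw [myCol_ll hv h2] at hw
            rcases max_choice v.val u.val with hc | hc <;>
              rcases max_choice v.val w.val with hd | hd <;> omega
          · rw [myCol_ll hv h1] at hu
            rw [myCol_lg hv h2] at hw
            rcases max_choice v.val u.val with hc | hc <;> omega
          · rw [myCol_lg hv h1] at hu
            rw [myCol_ll hv h2] at hw
            rcases max_choice v.val w.val with hd | hd <;> omega
          · rw [myCol_lg hv h1] at hu
            rw [myCol_lg hv h2] at hw
            omega
        exact Fin.ext hval
      calc {u : Fin n | u ≠ v ∧ myCol n m v u = a}.ncard ≤ 1 := by
            apply ncard_le_of_inj _ _ (fun _ => 0)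
            · intro u _; omega
            · intro u hu w hw _; exact hsub u hu w hw
        _ ≤ m := hm1
  · by_cases ha : a = n + v.val
    · apply ncard_le_of_inj _ _ (fun u => u.val)
      · rintro u ⟨hne, hcol⟩
        by_contra hu
        push_neg at hu
        rw [myCol_gg hv (by omega)] at hcol
        have := u.isLt
        have := v.isLt
        rcases max_choice v.val u.val with hc | hc <;> omega
      · rintro u ⟨_, _⟩ w ⟨_, _⟩ h
        exact Fin.ext h
    · by_cases ha2 : a = 2 * n + v.val
      · -- elements are high, below v
        apply ncard_le_of_inj _ _ (fun u => u.val - m)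
        · rintro u ⟨hne, hcol⟩
          by_cases h1 : u.val < m
          · rw [myCol_gl hv h1] at hcol
            have := v.isLt
            omega
          · rw [myCol_gg hv h1] at hcol
            have hune : u.val ≠ v.val := fun h => hne (Fin.ext h)
            have := u.isLt
            have := v.isLt
            rcases max_choice v.val u.val with hc | hc <;> omega
        · rintro u ⟨hun, hu⟩ w ⟨hwn, hw⟩ h
          have h1 : ¬ u.val < m := by
            intro h1
            rw [myCol_gl hv h1] at hu
            have := v.isLt
            omega
          have h2 : ¬ w.val < m := by
            intro h2
            rw [myCol_gl hv h2] at hw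
            have := v.isLt
            omega
          exact Fin.ext (by omega)
      · -- subsingleton: a = 2n + u.val
        have hsub : ∀ u ∈ {u : Fin n | u ≠ v ∧ myCol n m v u = a}, ∀ w ∈ {u : Fin n | u ≠ v ∧ myCol n m v u = a}, u = w := by
          rintro u ⟨hun, hu⟩ w ⟨hwn, hw⟩
          have key : ∀ x : Fin n, x ≠ v → myCol n m v x = a → a = 2 * n + x.val := by
            intro x hxn hx
            by_cases h1 : x.val < m
            · rw [myCol_gl hv h1] at hx
              omega
            · rw [myCol_gg hv h1] at hx
              rcases max_choice v.val x.val with hc | hc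
              · omega
              · omega
          have h1 := key u hun hu
          have h2 := key w hwn hw
          exact Fin.ext (by omega)
        calc {u : Fin n | u ≠ v ∧ myCol n m v u = a}.ncard ≤ 1 := by
              apply ncard_le_of_inj _ _ (fun _ => 0)
              · intro u _; omega
              · intro u hu w hw _; exact hsub u hu w hw
          _ ≤ m := hm1

lemma myCol_monDeg_eq {n m : ℕ} (hmn : m < n) :
    monDeg (myCol n m) ⟨m, hmn⟩ (n + m) = m := by
  unfold monDeg
  have hset : {u : Fin n | u ≠ ⟨m, hmn⟩ ∧ myCol n m ⟨m, hmn⟩ u = n + m}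
      = {u : Fin n | u.val < m} := by
    ext u
    simp only [Set.mem_setOf_eq]
    constructor
    · rintro ⟨hne, hcol⟩
      by_contra hu
      push_neg at hu
      rw [myCol_gg (by simp) (by omega)] at hcol
      have := u.isLt
      rcases max_choice (m : ℕ) u.val with hc | hc <;> simp at hc <;> omega
    · intro hu
      refine ⟨fun h => by simp [Fin.ext_iff] at h; omega, ?_⟩
      rw [myCol_gl (by simp) hu]
  rw [hset, ncard_val_lt m hmn.le]

lemma myCol_symm (n m : ℕ) (u v : Fin n) : myCol n m u v = myCol n m v u := by
  by_cases hu : u.val < m <;> by_cases hv : v.val < m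
  · rw [myCol_ll hu hv, myCol_ll hv hu, Nat.max_comm]
  · rw [myCol_lg hu hv, myCol_gl hv hu]
  · rw [myCol_gl hu hv, myCol_lg hv hu]
  · rw [myCol_gg hu hv, myCol_gg hv hu, Nat.max_comm]

/-- Every PC cycle for `myCol n m` contains two distinct vertices of value ≥ m. -/
lemma pc_two_high {n m M : ℕ} {c : ZMod M → Fin n} (h : IsPCCycle (myCol n m) M c) :
    ∃ w1 w2 : Fin n, w1 ∈ Set.range c ∧ w2 ∈ Set.range c ∧
      m ≤ w1.val ∧ m ≤ w2.val ∧ w1 ≠ w2 := by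
  obtain ⟨h3, hinj, hne⟩ := h
  haveI : NeZero M := ⟨by omega⟩
  have e1 : ∀ i : ZMod M, i - 1 + 1 = i := fun i => by ring
  have e2 : ∀ i : ZMod M, i - 1 + 2 = i + 1 := fun i => by ring
  have hex : ∃ i, m ≤ (c i).val := by
    by_contra hall
    push_neg at hall
    obtain ⟨i0, hi0⟩ := Finite.exists_max (fun i => (c i).val)
    apply hne (i0 - 1)
    rw [e1, e2]
    rw [myCol_ll (hall _) (hall _), myCol_ll (hall _) (hall _)]
    rw [Nat.max_eq_right (hi0 (i0 - 1)), Nat.max_eq_left (hi0 (i0 + 1))]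
  obtain ⟨i0, hi0⟩ := hex
  by_cases huniq : ∀ i, m ≤ (c i).val → c i = c i0
  · exfalso
    haveI : Fact (1 < M) := ⟨by omega⟩
    have hprev : (c (i0 - 1)).val < m := by
      by_contra hp
      push_neg at hp
      have h1 : i0 - 1 = i0 := hinj (huniq _ hp)
      have : (1 : ZMod M) = 0 := by
        have := sub_eq_self.mp h1
        exact this
      exact one_ne_zero this
    have hnext : (c (i0 + 1)).val < m := by
      by_contra hp
      push_neg at hp
      have h1 : i0 + 1 = i0 := hinj (huniq _ hp)
      have : (1 : ZMod M) = 0 := by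
        have : i0 + 1 = i0 + 0 := by rw [add_zero]; exact h1
        exact add_left_cancel this
      exact one_ne_zero this
    apply hne (i0 - 1)
    rw [e1, e2]
    rw [myCol_lg hprev (by omega), myCol_gl (by omega) hnext]
  · push_neg at huniq
    obtain ⟨i1, hi1, hne1⟩ := huniq
    exact ⟨c i1, c i0, ⟨i1, rfl⟩, ⟨i0, rfl⟩, hi1, hi0, hne1⟩


/-- For every even k ≥ 2 and n ≥ (9/2)k − 3 there is a coloring of K_n with
Δ^mon(G) = n − (3/2)k containing at most k − 1 disjoint PC cycles. -/
theorem stmt18 (k n : ℕ) (hke : Even k) (hk : 2 ≤ k) (hn : 9 * k ≤ 2 * n + 6) :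
    ∃ col : Fin n → Fin n → ℕ,
      (∀ u v, col u v = col v u) ∧
      2 * maxMonDeg col + 3 * k = 2 * n ∧
      ¬ HasKDisjointPCCycles col k := by
  obtain ⟨r, hr⟩ := hke
  have hr1 : 1 ≤ r := by omega
  set m : ℕ := n - 3 * r with hm
  have hmn : m < n := by omega
  have hm1 : 1 ≤ m := by omega
  have htm : n - m ≤ m + 1 := by omega
  refine ⟨myCol n m, fun u v => myCol_symm n m u v, ?_, ?_⟩
  · -- maxMonDeg = m
    have hub : ∀ d ∈ {d | ∃ v a, d = monDeg (myCol n m) v a}, d ≤ m := by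
      rintro d ⟨v, a, rfl⟩
      exact myCol_monDeg_le hm1 hmn htm v a
    have hmem : m ∈ {d | ∃ v a, d = monDeg (myCol n m) v a} :=
      ⟨⟨m, hmn⟩, n + m, (myCol_monDeg_eq hmn).symm⟩
    have hmax : maxMonDeg (myCol n m) = m :=
      le_antisymm (csSup_le ⟨m, hmem⟩ hub) (le_csSup ⟨m, hub⟩ hmem)
    rw [hmax]
    omega
  · rintro ⟨ms, c, hpc, hdisj⟩
    have key := fun j => pc_two_high (hpc j)
    choose w1 w2 hw1r hw2r hw1m hw2m hwne using key
    have hsame : ∀ j j' (x : Fin n), x ∈ Set.range (c j) → x ∈ Set.range (c j') → j = j' := by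
      intro j j' x hx hx'
      by_contra hjj
      exact Set.disjoint_left.mp (hdisj j j' hjj) hx hx'
    set F : Fin k × Bool → {u : Fin n // m ≤ u.val} :=
      fun p => cond p.2 ⟨w1 p.1, hw1m p.1⟩ ⟨w2 p.1, hw2m p.1⟩ with hF
    have hFinj : Function.Injective F := by
      rintro ⟨j, b⟩ ⟨j', b'⟩ h
      cases b <;> cases b' <;>
        simp only [hF, Bool.cond_true, Bool.cond_false, Subtype.mk.injEq] at h
      · have hmem : w2 j ∈ Set.range (c j') := by rw [h]; exact hw2r j'
        have hj : j = j' := hsame j j' _ (hw2r j) hmem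
        rw [hj]
      · exfalso
        have hmem : w2 j ∈ Set.range (c j') := by rw [h]; exact hw1r j'
        have hj : j = j' := hsame j j' _ (hw2r j) hmem
        rw [hj] at h
        exact hwne j' h.symm
      · exfalso
        have hmem : w1 j ∈ Set.range (c j') := by rw [h]; exact hw2r j'
        have hj : j = j' := hsame j j' _ (hw1r j) hmem
        rw [hj] at h
        exact hwne j' h
      · have hmem : w1 j ∈ Set.range (c j') := by rw [h]; exact hw1r j'
        have hj : j = j' := hsame j j' _ (hw1r j) hmem
        rw [hj]
    have h1 : Fintype.card (Fin k × Bool) ≤ Fintype.card {u : Fin n // m ≤ u.val} :=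
      Fintype.card_le_of_injective F hFinj
    have h2 : Fintype.card {u : Fin n // m ≤ u.val} ≤ n - m := by
      have hg : Function.Injective
          (fun u : {u : Fin n // m ≤ u.val} =>
            (⟨u.1.val - m, by have := u.1.isLt; have := u.2; omega⟩ : Fin (n - m))) := by
        rintro ⟨u, hu⟩ ⟨v, hv⟩ h
        have h' : u.val - m = v.val - m := by simpa using congrArg Fin.val h
        exact Subtype.ext (Fin.ext (show u.val = v.val by omega))
      have := Fintype.card_le_of_injective _ hg
      simpa using this
    simp only [Fintype.card_prod, Fintype.card_fin, Fintype.card_bool] at h1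
    omega
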